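/- Every block inequality ⟨−a(τ), x⟩ ≤ β(τ) associated with a feasible vector τ ∈ {0,1,2,3}^p is valid for the orbisack Orb(p), i.e., is satisfied by every 0/1 p×2 matrix whose first column is lexicographically ≥ its second column. -/
import Mathlib


open scoped Classical
open Finset

noncomputable section

/-- The vertices of the orbisack: 0/1 `p×2`-matrices whose first column is
lexicographically greater than or equal to the second column. -/
def OrbVerts (p : ℕ) : Set (Fin p → Fin 2 → ℝ) :=
  {x | (∀ i j, x i j = 0 ∨ x i j = 1) ∧
       ∀ i : Fin p, (∀ k, k < i → x k 0 = x k 1) → x i 1 ≤ x i 0}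

/-- The orbisack `Orb(p)`. -/
def Orbisack (p : ℕ) : Set (Fin p → Fin 2 → ℝ) :=
  convexHull ℝ (OrbVerts p)

/-- The critical row of a vertex (0-indexed; equal to `p` if the columns coincide). -/
def critRow {p : ℕ} (x : Fin p → Fin 2 → ℝ) : ℕ :=
  sInf ({i : ℕ | ∃ h : i < p, x ⟨i, h⟩ 0 = 1 ∧ x ⟨i, h⟩ 1 = 0} ∪ {p})

/-- `y(x)`: the unit vector marking the critical row (zero if there is none). -/
def yVec {p : ℕ} (x : Fin p → Fin 2 → ℝ) : Fin p → ℝ :=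
  fun i => if (i : ℕ) = critRow x then 1 else 0

/-- `x̃(x)`: the entries of `x` strictly below the critical row. -/
def xTilde {p : ℕ} (x : Fin p → Fin 2 → ℝ) : Fin p → Fin 2 → ℝ :=
  fun i j => if critRow x < (i : ℕ) then x i j else 0

/-- `z(x)`: the (coinciding) entries of `x` strictly above the critical row. -/
def zVec {p : ℕ} (x : Fin p → Fin 2 → ℝ) : Fin p → ℝ :=
  fun i => if (i : ℕ) < critRow x then x i 0 else 0

/-- `Σ_{k<i} y_k`. -/
def ySumLT {p : ℕ} (y : Fin p → ℝ) (i : Fin p) : ℝ :=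
  ∑ k ∈ Finset.univ.filter (fun k : Fin p => k < i), y k

/-- `Σ_{k≤i} y_k`. -/
def ySumLE {p : ℕ} (y : Fin p → ℝ) (i : Fin p) : ℝ :=
  ∑ k ∈ Finset.univ.filter (fun k : Fin p => k ≤ i), y k

/-- Feasible vectors `τ ∈ {0,1,2,3}^p` (extended by `0` beyond `p`): `τ_0 = 3` and
there is an index `i*` with `τ_{i'} ≠ 0` for `i' < i*`, `τ_{i*} = 3`, and `τ_{i'} = 0`
for `i' > i*`. -/
def FeasibleTau (p : ℕ) (τ : ℕ → ℕ) : Prop :=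
  τ 0 = 3 ∧ (∀ i < p, τ i ≤ 3) ∧ (∀ i, p ≤ i → τ i = 0) ∧
  ∃ i < p, (∀ i' < i, τ i' ≠ 0) ∧ τ i = 3 ∧ ∀ i', i < i' → τ i' = 0

/-- `i* = max{i : τ_i ≠ 0}`. -/
def iStar (τ : ℕ → ℕ) : ℕ := sSup {i | τ i ≠ 0}

/-- The coefficients `α_i` associated with a feasible `τ` (downward recursion from `i*`). -/
def alphaFun (τ : ℕ → ℕ) (istar : ℕ) (i : ℕ) : ℕ :=
  if istar < i then 0
  else if i = istar ∨ i + 1 = istar then 1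
  else if τ (i + 1) = 3 then 2 * alphaFun τ istar (i + 1) else alphaFun τ istar (i + 1)
termination_by istar - i
decreasing_by all_goals omega

/-- `α(τ)`. -/
def alphaTau (τ : ℕ → ℕ) (i : ℕ) : ℕ := alphaFun τ (iStar τ) i

/-- The coefficient matrix `a(τ)` of the block inequality. -/
def aMat (τ : ℕ → ℕ) (i : ℕ) (j : Fin 2) : ℝ :=
  if τ i = 1 then (if j = 0 then (alphaTau τ i : ℝ) else 0)
  else if τ i = 2 then (if j = 0 then 0 else -(alphaTau τ i : ℝ))
  else if τ i = 3 then (if j = 0 then (alphaTau τ i : ℝ) else -(alphaTau τ i : ℝ))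
  else 0

/-- The right-hand side `β(τ) = Σ_{i : τ_i = 2} α_i`. -/
def betaTau (p : ℕ) (τ : ℕ → ℕ) : ℝ :=
  ∑ i ∈ Finset.range p, if τ i = 2 then (alphaTau τ i : ℝ) else 0

/-- The block inequality `⟨-a(τ), x⟩ ≤ β(τ)`. -/
def BlockIneq (p : ℕ) (τ : ℕ → ℕ) (x : Fin p → Fin 2 → ℝ) : Prop :=
  ∑ i : Fin p, (-(aMat τ (i : ℕ) 0) * x i 0 + -(aMat τ (i : ℕ) 1) * x i 1) ≤ betaTau p τ

/-- The linear system describing `Q_p^{x,y}`. -/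
def QxySystem (p : ℕ) : Set ((Fin p → Fin 2 → ℝ) × (Fin p → ℝ)) :=
  {w | ∀ i : Fin p,
    w.1 i 0 ≤ 1 ∧
    0 ≤ w.1 i 1 ∧
    0 ≤ w.2 i ∧
    w.1 i 0 - w.1 i 1 - ySumLT w.2 i ≤ w.2 i ∧
    w.2 i ≤ w.1 i 0 ∧
    w.2 i ≤ 1 - w.1 i 1 ∧
    w.2 i ≤ w.1 i 0 - w.1 i 1 + ySumLT w.2 i ∧
    w.2 i ≤ 1 - ySumLT w.2 i}

end

lemma alphaFun_zero_of_gt (τ : ℕ → ℕ) (m i : ℕ) (h : m < i) : alphaFun τ m i = 0 := by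
  rw [alphaFun, if_pos h]

lemma alphaFun_self (τ : ℕ → ℕ) (m : ℕ) : alphaFun τ m m = 1 := by
  rw [alphaFun]; simp

lemma alphaFun_pred (τ : ℕ → ℕ) (m j : ℕ) (h : j + 1 = m) : alphaFun τ m j = 1 := by
  rw [alphaFun, if_neg (by omega), if_pos (Or.inr h)]

lemma alphaFun_of_lt (τ : ℕ → ℕ) (m j : ℕ) (h : j < m) (h2 : j + 1 ≠ m) :
    alphaFun τ m j =
      if τ (j + 1) = 3 then 2 * alphaFun τ m (j + 1) else alphaFun τ m (j + 1) := by
  rw [alphaFun, if_neg (by omega), if_neg (by omega)]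

lemma alphaFun_pos (τ : ℕ → ℕ) (m : ℕ) :
    ∀ n j, m - j = n → j ≤ m → 1 ≤ alphaFun τ m j := by
  intro n
  induction n with
  | zero =>
    intro j h hj
    have hjm : j = m := by omega
    subst hjm
    rw [alphaFun_self]
  | succ k ih =>
    intro j h hj
    have hjm : j < m := by omega
    by_cases h2 : j + 1 = m
    · rw [alphaFun_pred τ m j h2]
    · rw [alphaFun_of_lt τ m j hjm h2]
      have := ih (j + 1) (by omega) (by omega)
      split <;> omega

lemma alphaFun_sum (τ : ℕ → ℕ) (m : ℕ) :
    ∀ n j, m - j = n → j ≤ m →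
      (∑ i ∈ Finset.Ioc j m, if τ i = 3 then alphaFun τ m i else 0) ≤ alphaFun τ m j := by
  intro n
  induction n with
  | zero =>
    intro j h hj
    have hjm : j = m := by omega
    subst hjm
    simp
  | succ k ih =>
    intro j h hj
    have hjm : j < m := by omega
    have hIoc : Finset.Ioc j m = insert (j + 1) (Finset.Ioc (j + 1) m) := by
      rw [← Finset.Icc_add_one_left_eq_Ioc, Finset.Icc_eq_cons_Ioc (by omega), Finset.cons_eq_insert]
    rw [hIoc, Finset.sum_insert (by simp)]
    have hs := ih (j + 1) (by omega) (by omega)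
    have hp := alphaFun_pos τ m (m - (j + 1)) (j + 1) rfl (by omega)
    by_cases h2 : j + 1 = m
    · rw [alphaFun_pred τ m j h2, h2]
      simp [alphaFun_self]
      split <;> simp
    · rw [alphaFun_of_lt τ m j hjm h2]
      by_cases h3 : τ (j + 1) = 3 <;> simp [h3] <;> omega

lemma iStar_eq (τ : ℕ → ℕ) (m : ℕ) (hm3 : τ m = 3) (h0 : ∀ i', m < i' → τ i' = 0) :
    iStar τ = m := by
  have hbdd : BddAbove {i | τ i ≠ 0} := ⟨m, fun j hj => by
    by_contra hc; push_neg at hc; exact hj (h0 j hc)⟩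
  have hmem : m ∈ {i | τ i ≠ 0} := by simp [hm3]
  refine le_antisymm (csSup_le ⟨m, hmem⟩ fun j hj => ?_) (le_csSup hbdd hmem)
  by_contra hc; push_neg at hc; exact hj (h0 j hc)

/-- Every block inequality associated with a feasible vector `τ` is valid for the
orbisack `Orb(p)`. -/
theorem blockIneq_valid (p : ℕ) (τ : ℕ → ℕ) (hτ : FeasibleTau p τ) :
    ∀ x ∈ OrbVerts p, BlockIneq p τ x := by
  obtain ⟨h00, hle3, hbig, m, hmp, hne0, hm3, hafter⟩ := hτ
  have hiS : iStar τ = m := iStar_eq τ m hm3 hafter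
  intro x hx
  obtain ⟨h01, hlex⟩ := hx
  have hxb : ∀ (i : Fin p) (j : Fin 2), 0 ≤ x i j ∧ x i j ≤ 1 := by
    intro i j; rcases h01 i j with h | h <;> simp [h]
  have hαT : ∀ i, alphaTau τ i = alphaFun τ m i := fun i => by rw [alphaTau, hiS]
  set F : Fin p → ℝ := fun i =>
    (-(aMat τ (i : ℕ) 0) * x i 0 + -(aMat τ (i : ℕ) 1) * x i 1)
      - (if τ (i : ℕ) = 2 then (alphaFun τ m (i : ℕ) : ℝ) else 0) with hF
  have hbeta : betaTau p τ
      = ∑ i : Fin p, (if τ (i : ℕ) = 2 then (alphaFun τ m (i : ℕ) : ℝ) else 0) := by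
    rw [betaTau, ← Fin.sum_univ_eq_sum_range]
    exact Finset.sum_congr rfl fun i _ => by rw [hαT]
  unfold BlockIneq
  rw [hbeta, ← sub_nonpos, ← Finset.sum_sub_distrib]
  show ∑ i : Fin p, F i ≤ 0
  -- pointwise bounds
  have key1 : ∀ i : Fin p, x i 0 = x i 1 → F i ≤ 0 := by
    intro i hrow
    have ht := hle3 (i : ℕ) i.isLt
    obtain ⟨hx00, hx01⟩ := hxb i 0
    obtain ⟨hx10, hx11⟩ := hxb i 1
    have hA : (0 : ℝ) ≤ (alphaFun τ m (i : ℕ) : ℝ) := Nat.cast_nonneg _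
    have h4 : τ (i : ℕ) = 0 ∨ τ (i : ℕ) = 1 ∨ τ (i : ℕ) = 2 ∨ τ (i : ℕ) = 3 := by omega
    rcases h4 with h | h | h | h <;> simp only [hF] <;> simp [aMat, hαT, h] <;>
      nlinarith [hrow, hA, hx00, hx01, hx10, hx11]
  have key2 : ∀ i : Fin p, x i 0 = 1 → x i 1 = 0 → F i ≤ -(alphaFun τ m (i : ℕ) : ℝ) := by
    intro i h0 h1
    have ht := hle3 (i : ℕ) i.isLt
    have h4 : τ (i : ℕ) = 0 ∨ τ (i : ℕ) = 1 ∨ τ (i : ℕ) = 2 ∨ τ (i : ℕ) = 3 := by omega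
    rcases h4 with h | h | h | h
    · have him : m < (i : ℕ) := by
        rcases lt_trichotomy (i : ℕ) m with hh | hh | hh
        · exact absurd h (hne0 _ hh)
        · rw [hh] at h; omega
        · exact hh
      simp [hF, aMat, hαT, h, alphaFun_zero_of_gt τ m (i : ℕ) him]
    · simp [hF, aMat, hαT, h, h0, h1]
    · simp [hF, aMat, hαT, h, h0, h1]
    · simp [hF, aMat, hαT, h, h0, h1]
  have key3 : ∀ i : Fin p,
      F i ≤ if τ (i : ℕ) = 3 then (alphaFun τ m (i : ℕ) : ℝ) else 0 := by
    intro i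
    have ht := hle3 (i : ℕ) i.isLt
    obtain ⟨hx00, hx01⟩ := hxb i 0
    obtain ⟨hx10, hx11⟩ := hxb i 1
    have hA : (0 : ℝ) ≤ (alphaFun τ m (i : ℕ) : ℝ) := Nat.cast_nonneg _
    have h4 : τ (i : ℕ) = 0 ∨ τ (i : ℕ) = 1 ∨ τ (i : ℕ) = 2 ∨ τ (i : ℕ) = 3 := by omega
    rcases h4 with h | h | h | h <;> simp only [hF] <;> simp [aMat, hαT, h] <;>
      nlinarith [hA, hx00, hx01, hx10, hx11]
  by_cases hcrit : ∃ i : Fin p, x i 0 = 1 ∧ x i 1 = 0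
  · -- there is a critical row
    have hex : ∃ n, ∃ h : n < p, x ⟨n, h⟩ 0 = 1 ∧ x ⟨n, h⟩ 1 = 0 := by
      obtain ⟨i, hi⟩ := hcrit; exact ⟨i, i.isLt, hi⟩
    set c := Nat.find hex with hc
    obtain ⟨hcp, hc0, hc1⟩ := Nat.find_spec hex
    have hmin : ∀ k, k < c → ¬ ∃ h : k < p, x ⟨k, h⟩ 0 = 1 ∧ x ⟨k, h⟩ 1 = 0 :=
      fun k hk => Nat.find_min hex hk
    have hbelow : ∀ n (h : n < p), n < c → x ⟨n, h⟩ 0 = x ⟨n, h⟩ 1 := by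
      intro n
      induction n using Nat.strong_induction_on with
      | _ n ih =>
        intro h hn
        have hle := hlex ⟨n, h⟩ (fun k hk =>
          ih k.val (Fin.lt_def.mp hk) k.isLt (lt_trans (Fin.lt_def.mp hk) hn))
        rcases h01 ⟨n, h⟩ 0 with h0 | h0 <;> rcases h01 ⟨n, h⟩ 1 with h1 | h1
        · rw [h0, h1]
        · rw [h0, h1] at hle; linarith
        · exact absurd ⟨h, h0, h1⟩ (hmin n hn)
        · rw [h0, h1]
    set cF : Fin p := ⟨c, hcp⟩ with hcF
    have hsplit : ∑ i : Fin p, F i = F cF + ∑ i ∈ Finset.univ.erase cF, F i := by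
      rw [add_comm]; exact (Finset.sum_erase_add _ _ (Finset.mem_univ cF)).symm
    have hGle : ∑ i ∈ Finset.univ.erase cF, F i
        ≤ ∑ i ∈ Finset.univ.erase cF,
            (if c < (i : ℕ) ∧ τ (i : ℕ) = 3 then (alphaFun τ m (i : ℕ) : ℝ) else 0) := by
      apply Finset.sum_le_sum
      intro i hi
      have hic : (i : ℕ) ≠ c := by
        intro hcon
        exact (Finset.mem_erase.mp hi).1 (by simp [hcF, Fin.ext_iff, hcon])
      rcases lt_or_gt_of_ne hic with hlt | hgt
      · rw [if_neg (by omega)]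
        exact key1 i (hbelow i i.isLt hlt)
      · have h3' := key3 i
        by_cases h3 : τ (i : ℕ) = 3
        · rw [if_pos ⟨hgt, h3⟩]; simpa [h3] using h3'
        · rw [if_neg (by tauto)]; simpa [h3] using h3'
    have hGat : (if c < (cF : ℕ) ∧ τ (cF : ℕ) = 3 then (alphaFun τ m (cF : ℕ) : ℝ) else 0)
        = 0 := by
      rw [if_neg]; simp [hcF]
    have herase : ∑ i ∈ Finset.univ.erase cF,
          (if c < (i : ℕ) ∧ τ (i : ℕ) = 3 then (alphaFun τ m (i : ℕ) : ℝ) else 0)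
        = ∑ i : Fin p,
          (if c < (i : ℕ) ∧ τ (i : ℕ) = 3 then (alphaFun τ m (i : ℕ) : ℝ) else 0) :=
      Finset.sum_erase _ hGat
    have hsub : Finset.Ioc c m ⊆ Finset.range p := fun j hj => by
      rw [Finset.mem_Ioc] at hj; rw [Finset.mem_range]; omega
    have hvan : ∀ j ∈ Finset.range p, j ∉ Finset.Ioc c m →
        (if c < j ∧ τ j = 3 then (alphaFun τ m j : ℝ) else 0) = 0 := by
      intro j hjr hj
      rw [Finset.mem_Ioc] at hj; push_neg at hj
      by_cases hcj : c < j
      · rw [if_neg]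
        rintro ⟨-, h3⟩
        rw [hafter j (hj hcj)] at h3
        omega
      · rw [if_neg (by tauto)]
    have hGsum : ∑ i : Fin p,
          (if c < (i : ℕ) ∧ τ (i : ℕ) = 3 then (alphaFun τ m (i : ℕ) : ℝ) else 0)
        = ∑ j ∈ Finset.Ioc c m, (if τ j = 3 then (alphaFun τ m j : ℝ) else 0) := by
      rw [Fin.sum_univ_eq_sum_range
        (fun j => if c < j ∧ τ j = 3 then (alphaFun τ m j : ℝ) else 0) p]
      rw [← Finset.sum_subset hsub hvan]
      exact Finset.sum_congr rfl fun j hj => by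
        rw [Finset.mem_Ioc] at hj; simp [hj.1]
    have hnat : (∑ j ∈ Finset.Ioc c m, if τ j = 3 then alphaFun τ m j else 0)
        ≤ alphaFun τ m c := by
      by_cases hcm : c ≤ m
      · exact alphaFun_sum τ m (m - c) c rfl hcm
      · rw [Finset.Ioc_eq_empty (by omega)]; simp
    have hcast : ∑ j ∈ Finset.Ioc c m, (if τ j = 3 then (alphaFun τ m j : ℝ) else 0)
        ≤ (alphaFun τ m c : ℝ) := by
      calc ∑ j ∈ Finset.Ioc c m, (if τ j = 3 then (alphaFun τ m j : ℝ) else 0)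
          = ((∑ j ∈ Finset.Ioc c m, if τ j = 3 then alphaFun τ m j else 0 : ℕ) : ℝ) := by
            rw [Nat.cast_sum]
            exact Finset.sum_congr rfl fun j _ => by split <;> simp
        _ ≤ (alphaFun τ m c : ℝ) := Nat.cast_le.mpr hnat
    have hFc : F cF ≤ -(alphaFun τ m c : ℝ) := key2 cF hc0 hc1
    calc ∑ i : Fin p, F i = F cF + ∑ i ∈ Finset.univ.erase cF, F i := hsplit
      _ ≤ -(alphaFun τ m c : ℝ) + ∑ i ∈ Finset.univ.erase cF,
            (if c < (i : ℕ) ∧ τ (i : ℕ) = 3 then (alphaFun τ m (i : ℕ) : ℝ) else 0) :=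
          add_le_add hFc hGle
      _ = -(alphaFun τ m c : ℝ)
            + ∑ j ∈ Finset.Ioc c m, (if τ j = 3 then (alphaFun τ m j : ℝ) else 0) := by
          rw [herase, hGsum]
      _ ≤ -(alphaFun τ m c : ℝ) + (alphaFun τ m c : ℝ) := by linarith
      _ = 0 := by ring
  · -- no critical row: all rows coincide
    push_neg at hcrit
    have hall : ∀ n (h : n < p), x ⟨n, h⟩ 0 = x ⟨n, h⟩ 1 := by
      intro n
      induction n using Nat.strong_induction_on with
      | _ n ih =>
        intro h
        have hle := hlex ⟨n, h⟩ (fun k hk => ih k.val (Fin.lt_def.mp hk) k.isLt)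
        rcases h01 ⟨n, h⟩ 0 with h0 | h0 <;> rcases h01 ⟨n, h⟩ 1 with h1 | h1
        · rw [h0, h1]
        · rw [h0, h1] at hle; linarith
        · exact absurd h1 (hcrit ⟨n, h⟩ h0)
        · rw [h0, h1]
    exact Finset.sum_nonpos fun i _ => key1 i (hall i i.isLt)
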